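/- Let A be the 4th-order 2-dimensional real tensor with all entries zero except A_{1111}=A_{2112}=1. Then for every λ ∈ [0,1], λ is a real Z-eigenvalue of A; in particular A has infinitely many real Z-eigenvalues. -/

import Mathlib

/-! `B0 u³ = (u₀³, u₀² u₁) = u₀² • u`, so every unit vector is an eigenvector with eigenvalue `u₀²`;
taking `u = (√λ, √(1 - λ))` realises each `λ ∈ [0, 1]`. -/

open Finset

/-- For a 4th-order 2-dimensional tensor `A`, `(A x³)_j = ∑ A_{j i₂ i₃ i₄} x_{i₂} x_{i₃} x_{i₄}`. -/
noncomputable def app3 (A : Fin 2 → Fin 2 → Fin 2 → Fin 2 → ℝ) (x : Fin 2 → ℝ) :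
    Fin 2 → ℝ :=
  fun j => ∑ a : Fin 2, ∑ b : Fin 2, ∑ c : Fin 2, A j a b c * x a * x b * x c

/-- The tensor with `A_{1111} = A_{2112} = 1` and all other entries zero. -/
noncomputable def B0 : Fin 2 → Fin 2 → Fin 2 → Fin 2 → ℝ := fun i j k l =>
  if (i, j, k, l) = (0, 0, 0, 0) ∨ (i, j, k, l) = (1, 0, 0, 1) then 1 else 0

def IsZEigenvalue (A : Fin 2 → Fin 2 → Fin 2 → Fin 2 → ℝ) (lam : ℝ) : Prop :=
  ∃ u : Fin 2 → ℝ, u 0 ^ 2 + u 1 ^ 2 = 1 ∧ ∀ j, app3 A u j = lam * u j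

lemma app3_B0 (x : Fin 2 → ℝ) : app3 B0 x = ![x 0 ^ 3, x 0 ^ 2 * x 1] := by
  ext j
  fin_cases j <;> simp [app3, B0, Fin.sum_univ_two, Prod.ext_iff, pow_succ]

lemma app3_B0_eq_smul_of_sq_eq {lam : ℝ} {u : Fin 2 → ℝ} (hu : u 0 ^ 2 = lam) (j : Fin 2) :
    app3 B0 u j = lam * u j := by
  rw [app3_B0]
  fin_cases j <;> simp [← hu]; ring

theorem isZEigenvalue_B0_of_mem_Icc {lam : ℝ} (hlam : lam ∈ Set.Icc (0 : ℝ) 1) :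
    IsZEigenvalue B0 lam := by
  obtain ⟨h0, h1⟩ := hlam
  have hsq : √lam ^ 2 = lam := Real.sq_sqrt h0
  refine ⟨![√lam, √(1 - lam)], ?_, app3_B0_eq_smul_of_sq_eq hsq⟩
  simp [hsq, Real.sq_sqrt (sub_nonneg.2 h1)]

/-- Every `λ ∈ [0,1]` is a real Z-eigenvalue of `B0`; in particular `B0` has infinitely many
real Z-eigenvalues. -/
theorem stmt2 :
    (∀ lam ∈ Set.Icc (0 : ℝ) 1, ∃ u : Fin 2 → ℝ,
        u 0 ^ 2 + u 1 ^ 2 = 1 ∧ ∀ j, app3 B0 u j = lam * u j) ∧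
    {lam : ℝ | ∃ u : Fin 2 → ℝ,
        u 0 ^ 2 + u 1 ^ 2 = 1 ∧ ∀ j, app3 B0 u j = lam * u j}.Infinite :=
  ⟨fun _ => isZEigenvalue_B0_of_mem_Icc,
    (Set.Icc_infinite zero_lt_one).mono fun _ => isZEigenvalue_B0_of_mem_Icc⟩
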